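/- arXiv:2302.04088 — 3 statements merged into one kernel-verified Lean document; each statement's English description precedes it below -/
import Mathlib

section
/- (Proposition 1, Möbius part: manifold preserving.) For every c > 0 and all x, y ∈ E with c·‖x‖² < 1 and c·‖y‖² < 1, the Möbius sum satisfies c·‖x ⊕_c y‖² < 1; that is, Möbius addition maps the Poincaré ball B_c × B_c into B_c. -/
open scoped RealInnerProductSpace

variable {E : Type*} [NormedAddCommGroup E] [InnerProductSpace ℝ E] [FiniteDimensional ℝ E]

/-- Möbius addition on the Poincaré ball of curvature `-c`. -/
noncomputable def mobiusAdd (c : ℝ) (x y : E) : E :=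
  (1 / (1 + 2 * c * ⟪x, y⟫ + c ^ 2 * ‖x‖ ^ 2 * ‖y‖ ^ 2)) •
    ((1 + 2 * c * ⟪x, y⟫ + c * ‖y‖ ^ 2) • x + (1 - c * ‖x‖ ^ 2) • y)

/-! The argument is the classical identity
`1 - c‖x ⊕_c y‖² = (1 - c‖x‖²)(1 - c‖y‖²) / (1 + 2c⟪x, y⟫ + c²‖x‖²‖y‖²)`:
on the ball both factors of the numerator are positive, and Cauchy–Schwarz bounds the
denominator below by `(1 - c‖x‖‖y‖)² > 0`. -/

section InnerProductSpace

variable {F : Type*} [NormedAddCommGroup F] [InnerProductSpace ℝ F]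

theorem norm_smul_add_smul_sq (a b : ℝ) (x y : F) :
    ‖a • x + b • y‖ ^ 2 = a ^ 2 * ‖x‖ ^ 2 + 2 * (a * b) * ⟪x, y⟫ + b ^ 2 * ‖y‖ ^ 2 := by
  rw [norm_add_sq_real, norm_smul, norm_smul, real_inner_smul_left, real_inner_smul_right,
    Real.norm_eq_abs, Real.norm_eq_abs, mul_pow, mul_pow, sq_abs, sq_abs]
  ring

theorem one_sub_mul_norm_mobiusAdd_sq (c : ℝ) (x y : F)
    (hD : 1 + 2 * c * ⟪x, y⟫ + c ^ 2 * ‖x‖ ^ 2 * ‖y‖ ^ 2 ≠ 0) :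
    1 - c * ‖mobiusAdd c x y‖ ^ 2 =
      (1 - c * ‖x‖ ^ 2) * (1 - c * ‖y‖ ^ 2) / (1 + 2 * c * ⟪x, y⟫ + c ^ 2 * ‖x‖ ^ 2 * ‖y‖ ^ 2) := by
  rw [mobiusAdd, norm_smul, mul_pow, norm_smul_add_smul_sq, Real.norm_eq_abs, sq_abs]
  set D := 1 + 2 * c * ⟪x, y⟫ + c ^ 2 * ‖x‖ ^ 2 * ‖y‖ ^ 2 with hD_def
  field_simp
  rw [hD_def]
  ring

theorem mobiusAdd_denom_pos {c : ℝ} (hc : 0 < c) {x y : F} (hx : c * ‖x‖ ^ 2 < 1)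
    (hy : c * ‖y‖ ^ 2 < 1) : 0 < 1 + 2 * c * ⟪x, y⟫ + c ^ 2 * ‖x‖ ^ 2 * ‖y‖ ^ 2 := by
  have hxy : c * (‖x‖ * ‖y‖) < 1 := by
    have hsq : (c * (‖x‖ * ‖y‖)) ^ 2 = (c * ‖x‖ ^ 2) * (c * ‖y‖ ^ 2) := by ring
    have hlt : (c * (‖x‖ * ‖y‖)) ^ 2 < 1 := hsq ▸
      mul_lt_one_of_nonneg_of_lt_one_left (by positivity) hx hy.le
    exact (pow_lt_one_iff_of_nonneg (by positivity) two_ne_zero).1 hlt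
  have hCS : -(‖x‖ * ‖y‖) ≤ ⟪x, y⟫ := neg_le_of_abs_le (abs_real_inner_le_norm x y)
  calc 0 < (1 - c * (‖x‖ * ‖y‖)) ^ 2 := pow_pos (sub_pos.2 hxy) 2
    _ ≤ 1 + 2 * c * ⟪x, y⟫ + c ^ 2 * ‖x‖ ^ 2 * ‖y‖ ^ 2 := by
      nlinarith [mul_le_mul_of_nonneg_left hCS hc.le]

end InnerProductSpace

theorem mobiusAdd_mem_ball (c : ℝ) (hc : 0 < c) (x y : E)
    (hx : c * ‖x‖ ^ 2 < 1) (hy : c * ‖y‖ ^ 2 < 1) :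
    c * ‖mobiusAdd c x y‖ ^ 2 < 1 := by
  have hD := mobiusAdd_denom_pos hc hx hy
  have hpos : 0 < 1 - c * ‖mobiusAdd c x y‖ ^ 2 := by
    rw [one_sub_mul_norm_mobiusAdd_sq c x y hD.ne']
    exact div_pos (mul_pos (sub_pos.2 hx) (sub_pos.2 hy)) hD
  linarith
end

section
/- (Second cancellation law.) For every c > 0 and all u, x ∈ E with c·‖u‖² < 1 and c·‖x‖² < 1, one has u ⊕_c ((−u) ⊕_c x) = x. -/
open scoped RealInnerProductSpace

variable {E : Type*} [NormedAddCommGroup E] [InnerProductSpace ℝ E] [FiniteDimensional ℝ E]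

/-!
Write `v = (-u) ⊕_c x = α • u + β • x`. Expanding `⟪u, v⟫` and `‖v‖²` in `α, β`, the two
coefficients of `u ⊕_c v` become `-(1 - c‖u‖²) α` (in front of `u`) and `(1 - c‖u‖²) β` (the
denominator), so the `u`-components cancel and what is left is `x`. Inside the ball all
denominators are positive, since `1 + 2c⟪x, y⟫ + c²‖x‖²‖y‖² ≥ (1 - c‖x‖‖y‖)²`.
-/

section

variable {F : Type*} [NormedAddCommGroup F] [InnerProductSpace ℝ F]

theorem mobiusAdd_left_cancel_of_ne_zero {c : ℝ} {u x : F}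
    (hD : 1 - 2 * c * ⟪u, x⟫ + c ^ 2 * ‖u‖ ^ 2 * ‖x‖ ^ 2 ≠ 0) (hs : 1 - c * ‖u‖ ^ 2 ≠ 0) :
    mobiusAdd c u (mobiusAdd c (-u) x) = x := by
  set D := 1 - 2 * c * ⟪u, x⟫ + c ^ 2 * ‖u‖ ^ 2 * ‖x‖ ^ 2 with hD_def
  set s := 1 - c * ‖u‖ ^ 2 with hs_def
  set α := -(1 - 2 * c * ⟪u, x⟫ + c * ‖x‖ ^ 2) / D with hα
  set β := s / D with hβ
  have hv : mobiusAdd c (-u) x = α • u + β • x := by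
    rw [mobiusAdd, inner_neg_left, norm_neg]
    match_scalars <;> field_simp <;> ring
  have hinner : ⟪u, α • u + β • x⟫ = α * ‖u‖ ^ 2 + β * ⟪u, x⟫ := by
    rw [inner_add_right, real_inner_smul_right, real_inner_smul_right, real_inner_self_eq_norm_sq]
  have hnorm : ‖α • u + β • x‖ ^ 2 = α ^ 2 * ‖u‖ ^ 2 + 2 * (α * β) * ⟪u, x⟫ + β ^ 2 * ‖x‖ ^ 2 := by
    rw [norm_add_sq_real, norm_smul, norm_smul, real_inner_smul_left, real_inner_smul_right,
      Real.norm_eq_abs, Real.norm_eq_abs, mul_pow, mul_pow, sq_abs, sq_abs]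
    ring
  have hnum : 1 + 2 * c * ⟪u, α • u + β • x⟫ + c * ‖α • u + β • x‖ ^ 2 = -(s * α) := by
    rw [hinner, hnorm, hα, hβ]
    field_simp
    rw [hD_def, hs_def]
    ring
  have hden : 1 + 2 * c * ⟪u, α • u + β • x⟫ + c ^ 2 * ‖u‖ ^ 2 * ‖α • u + β • x‖ ^ 2 = s * β := by
    rw [hinner, hnorm, hα, hβ]
    field_simp
    rw [hD_def, hs_def]
    ring
  have hsβ : s * β ≠ 0 := mul_ne_zero hs (div_ne_zero hs hD)
  rw [hv, mobiusAdd, hnum, hden]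
  calc (1 / (s * β)) • ((-(s * α)) • u + s • (α • u + β • x))
      = (1 / (s * β) * (s * β)) • x := by module
    _ = x := by rw [one_div_mul_cancel hsβ, one_smul]

end

theorem mobiusAdd_left_cancel' (c : ℝ) (hc : 0 < c) (u x : E)
    (hu : c * ‖u‖ ^ 2 < 1) (hx : c * ‖x‖ ^ 2 < 1) :
    mobiusAdd c u (mobiusAdd c (-u) x) = x := by
  have hD := mobiusAdd_denom_pos hc (x := -u) (by rwa [norm_neg]) hx
  rw [inner_neg_left, norm_neg] at hD
  exact mobiusAdd_left_cancel_of_ne_zero (by linarith) (by linarith)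
end

section
/- (Gyrations preserve the norm.) For c > 0 and u, x, v ∈ E with c·‖u‖² < 1, c·‖x‖² < 1, c·‖v‖² < 1, define the gyration gyr[u,x](v) := (−(u ⊕_c x)) ⊕_c (u ⊕_c (x ⊕_c v)). Then ‖gyr[u,x](v)‖ = ‖v‖. -/
open scoped RealInnerProductSpace

variable {E : Type*} [NormedAddCommGroup E] [InnerProductSpace ℝ E] [FiniteDimensional ℝ E]

/-- The gyration `gyr[u,x](v)`. -/
noncomputable def gyration (c : ℝ) (u x v : E) : E :=
  mobiusAdd c (-(mobiusAdd c u x)) (mobiusAdd c u (mobiusAdd c x v))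

/-!
Left Möbius translation `y ↦ u ⊕ y` is conformal:
`‖u ⊕ a - u ⊕ b‖² = (1 - c‖u‖²)² ‖a - b‖² / (D(u,a) D(u,b))`, while
`1 - c‖u ⊕ a‖² = (1 - c‖u‖²)(1 - c‖a‖²) / D(u,a)`, where `D` is the denominator of `⊕`.
Hence it preserves `δ(a,b) = ‖a - b‖² / ((1 - c‖a‖²)(1 - c‖b‖²))`. Since
`‖(-a) ⊕ b‖² = δ(a,b) / (1 + c δ(a,b))`, the norm of `gyr[u,x] v` is governed by
`δ(u ⊕ x, u ⊕ (x ⊕ v)) = δ(x, x ⊕ v) = δ(x ⊕ 0, x ⊕ v) = δ(0, v)`, which governs `‖v‖` in the same way.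
-/

section

variable {F : Type*} [NormedAddCommGroup F] [InnerProductSpace ℝ F] {c : ℝ}

noncomputable def mobiusDenom (c : ℝ) (x y : F) : ℝ :=
  1 + 2 * c * ⟪x, y⟫ + c ^ 2 * ‖x‖ ^ 2 * ‖y‖ ^ 2

lemma mobiusAdd_def (x y : F) :
    mobiusAdd c x y = (mobiusDenom c x y)⁻¹ •
      ((1 + 2 * c * ⟪x, y⟫ + c * ‖y‖ ^ 2) • x + (1 - c * ‖x‖ ^ 2) • y) := by
  rw [mobiusAdd, mobiusDenom, one_div]

@[simp] lemma mobiusAdd_zero_left (y : F) : mobiusAdd c 0 y = y := by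
  simp [mobiusAdd]

@[simp] lemma mobiusAdd_zero_right (x : F) : mobiusAdd c x 0 = x := by
  simp [mobiusAdd]

lemma mobiusDenom_eq (x y : F) :
    mobiusDenom c x y = c * ‖x + y‖ ^ 2 + (1 - c * ‖x‖ ^ 2) * (1 - c * ‖y‖ ^ 2) := by
  rw [mobiusDenom, norm_add_sq_real]
  ring

lemma mobiusDenom_pos (hc : 0 ≤ c) {x y : F} (hx : c * ‖x‖ ^ 2 < 1) (hy : c * ‖y‖ ^ 2 < 1) :
    0 < mobiusDenom c x y := by
  rw [mobiusDenom_eq]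
  exact add_pos_of_nonneg_of_pos (by positivity) (mul_pos (by linarith) (by linarith))

lemma norm_mobiusAdd_sq_mul {x y : F} (hD : mobiusDenom c x y ≠ 0) :
    ‖mobiusAdd c x y‖ ^ 2 * mobiusDenom c x y = ‖x + y‖ ^ 2 := by
  rw [mobiusAdd_def, norm_smul, mul_pow, ← real_inner_self_eq_norm_sq ((_ : ℝ) • x + _),
    norm_add_sq_real]
  simp only [inner_add_left, inner_add_right, real_inner_smul_left, real_inner_smul_right,
    real_inner_comm x y, norm_inv, Real.norm_eq_abs, inv_pow, sq_abs]
  simp only [real_inner_self_eq_norm_sq]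
  field_simp
  rw [mobiusDenom]
  ring

lemma one_sub_norm_mobiusAdd_sq_mul {x y : F} (hD : mobiusDenom c x y ≠ 0) :
    (1 - c * ‖mobiusAdd c x y‖ ^ 2) * mobiusDenom c x y =
      (1 - c * ‖x‖ ^ 2) * (1 - c * ‖y‖ ^ 2) := by
  linear_combination (-c) * norm_mobiusAdd_sq_mul hD + mobiusDenom_eq (c := c) x y

lemma norm_mobiusAdd_sq_lt (hc : 0 ≤ c) {x y : F} (hx : c * ‖x‖ ^ 2 < 1)
    (hy : c * ‖y‖ ^ 2 < 1) : c * ‖mobiusAdd c x y‖ ^ 2 < 1 := by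
  have hD := mobiusDenom_pos hc hx hy
  have : 0 < (1 - c * ‖mobiusAdd c x y‖ ^ 2) * mobiusDenom c x y := by
    rw [one_sub_norm_mobiusAdd_sq_mul hD.ne']
    exact mul_pos (by linarith) (by linarith)
  linarith [pos_of_mul_pos_left this hD.le]

lemma norm_mobiusAdd_sub_mobiusAdd_sq_mul {u a b : F} (ha : mobiusDenom c u a ≠ 0)
    (hb : mobiusDenom c u b ≠ 0) :
    ‖mobiusAdd c u a - mobiusAdd c u b‖ ^ 2 * (mobiusDenom c u a * mobiusDenom c u b) =
      (1 - c * ‖u‖ ^ 2) ^ 2 * ‖a - b‖ ^ 2 := by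
  rw [mobiusAdd_def, mobiusAdd_def, ← real_inner_self_eq_norm_sq, ← real_inner_self_eq_norm_sq]
  simp only [inner_add_left, inner_add_right, inner_sub_left, inner_sub_right,
    real_inner_smul_left, real_inner_smul_right, real_inner_comm u a,
    real_inner_comm u b, real_inner_comm a b]
  simp only [real_inner_self_eq_norm_sq, norm_sub_sq_real]
  field_simp
  simp only [mobiusDenom]
  ring

/-- The point-pair invariant of the Poincaré ball: the hyperbolic distance `d` satisfies
`cosh (√c * d a b) = 1 + 2 * c * poincareDelta c a b`. -/
noncomputable def poincareDelta (c : ℝ) (a b : F) : ℝ :=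
  ‖a - b‖ ^ 2 / ((1 - c * ‖a‖ ^ 2) * (1 - c * ‖b‖ ^ 2))

lemma poincareDelta_mobiusAdd (hc : 0 ≤ c) {u a b : F} (hu : c * ‖u‖ ^ 2 < 1)
    (ha : c * ‖a‖ ^ 2 < 1) (hb : c * ‖b‖ ^ 2 < 1) :
    poincareDelta c (mobiusAdd c u a) (mobiusAdd c u b) = poincareDelta c a b := by
  have hDa := (mobiusDenom_pos hc hu ha).ne'
  have hDb := (mobiusDenom_pos hc hu hb).ne'
  have hu' : 1 - c * ‖u‖ ^ 2 ≠ 0 := by linarith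
  have ha' : 1 - c * ‖a‖ ^ 2 ≠ 0 := by linarith
  have hb' : 1 - c * ‖b‖ ^ 2 ≠ 0 := by linarith
  rw [poincareDelta, poincareDelta,
    eq_div_of_mul_eq hDa (one_sub_norm_mobiusAdd_sq_mul hDa),
    eq_div_of_mul_eq hDb (one_sub_norm_mobiusAdd_sq_mul hDb),
    eq_div_of_mul_eq (mul_ne_zero hDa hDb) (norm_mobiusAdd_sub_mobiusAdd_sq_mul hDa hDb)]
  field_simp

lemma norm_neg_mobiusAdd_sq (hc : 0 ≤ c) {a b : F} (ha : c * ‖a‖ ^ 2 < 1)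
    (hb : c * ‖b‖ ^ 2 < 1) :
    ‖mobiusAdd c (-a) b‖ ^ 2 = poincareDelta c a b / (1 + c * poincareDelta c a b) := by
  have ha' : 1 - c * ‖a‖ ^ 2 ≠ 0 := by linarith
  have hb' : 1 - c * ‖b‖ ^ 2 ≠ 0 := by linarith
  have hD : 0 < mobiusDenom c (-a) b := mobiusDenom_pos hc (by rwa [norm_neg]) hb
  have h := norm_mobiusAdd_sq_mul hD.ne'
  rw [mobiusDenom_eq, norm_neg, neg_add_eq_sub, norm_sub_rev] at hD h
  rw [poincareDelta, eq_div_of_mul_eq hD.ne' h]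
  field_simp
  ring

end

theorem norm_gyration (c : ℝ) (hc : 0 < c) (u x v : E)
    (hu : c * ‖u‖ ^ 2 < 1) (hx : c * ‖x‖ ^ 2 < 1) (hv : c * ‖v‖ ^ 2 < 1) :
    ‖gyration c u x v‖ = ‖v‖ := by
  have hxv := norm_mobiusAdd_sq_lt hc.le hx hv
  have h0 : c * ‖(0 : E)‖ ^ 2 < 1 := by simp
  have hdelta : poincareDelta c (mobiusAdd c u x) (mobiusAdd c u (mobiusAdd c x v)) =
      poincareDelta c 0 v := by
    rw [poincareDelta_mobiusAdd hc.le hu hx hxv, ← poincareDelta_mobiusAdd hc.le hx h0 hv,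
      mobiusAdd_zero_right]
  have hsq : ‖gyration c u x v‖ ^ 2 = ‖v‖ ^ 2 := by
    rw [gyration, norm_neg_mobiusAdd_sq hc.le (norm_mobiusAdd_sq_lt hc.le hu hx)
      (norm_mobiusAdd_sq_lt hc.le hu hxv), hdelta, ← norm_neg_mobiusAdd_sq hc.le h0 hv, neg_zero,
      mobiusAdd_zero_left]
  exact (sq_eq_sq₀ (norm_nonneg _) (norm_nonneg _)).1 hsq
end
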